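/- Let G be a c-edge-colored multigraph, c ≥ 3, in which every vertex is incident to at least two edges of different colors, at least one vertex is incident to at least three edges of pairwise different colors, and δ_dym(x) ≥ (n + 1)/2 for every vertex x (n = |V(G)|). Then G has a properly colored hamiltonian cycle. -/

import Mathlib

/-- A loopless multigraph whose edges are colored by vertices of a graph `H`
(given by the adjacency relation `adjH` on the color type `C`). -/
structure HCMultigraph (V C : Type) where
  E : Type
  ends : E → Sym2 V
  loopless : ∀ e, ¬ (ends e).IsDiag
  col : E → C

namespace HCMultigraph

variable {V C : Type} (adjH : C → C → Prop) (M : HCMultigraph V C)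

/-- `E_{uv}`: the set of edges of `M` with end vertices `u` and `v`. -/
def EdgesBetween (u v : V) : Set M.E := {e | M.ends e = s(u, v)}

/-- The neighborhood in `H` of a color. -/
def NH (a : C) : Set C := {b | adjH a b}

/-- `E_{uv}` is a dynamic edge set: it contains two edges whose colors have
incomparable neighborhoods in `H`. -/
def DynamicEdgeSet (u v : V) : Prop :=
  ∃ e ∈ M.EdgesBetween u v, ∃ f ∈ M.EdgesBetween u v,
    ¬ NH adjH (M.col e) ⊆ NH adjH (M.col f) ∧
    ¬ NH adjH (M.col f) ⊆ NH adjH (M.col e)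

/-- The set of edges incident with `u` (vertex set of the auxiliary graph `G_u`). -/
def Incident (u : V) : Set M.E := {e | u ∈ M.ends e}

/-- The auxiliary graph `G_u` (edges incident with `u`, adjacency given by
adjacency of colors in `H`) is a complete multipartite graph with at least `k`
(nonempty) parts. -/
def CompleteMultipartite (k : ℕ) (u : V) : Prop :=
  ∃ p : M.Incident u → ℕ,
    (∀ a b : M.Incident u, a ≠ b →
      (adjH (M.col a.1) (M.col b.1) ↔ p a ≠ p b)) ∧
    k ≤ (Set.range p).ncard

/-- The dynamic degree of `u`: the number of vertices `v` such that `E_{uv}` is a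
dynamic edge set. -/
noncomputable def dynDegree (u : V) : ℕ := {v | M.DynamicEdgeSet adjH u v}.ncard

/-- An `H`-path of length `k`: distinct vertices `x 0, …, x k`, edges
`e i ∈ E_{x i, x (i+1)}`, consecutive edge colors adjacent in `H`. -/
def IsHPath (k : ℕ) (x : ℕ → V) (e : ℕ → M.E) : Prop :=
  (∀ i ≤ k, ∀ j ≤ k, x i = x j → i = j) ∧
  (∀ i < k, e i ∈ M.EdgesBetween (x i) (x (i + 1))) ∧
  (∀ i, i + 1 < k → adjH (M.col (e i)) (M.col (e (i + 1))))

/-- An `H`-cycle of length `k + 1`: distinct vertices `x 0, …, x k`, edges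
`e i ∈ E_{x i, x (i+1)}` and `e k ∈ E_{x k, x 0}`, with consecutive edge colors
(cyclically) adjacent in `H`. -/
def IsHCycle (k : ℕ) (x : ℕ → V) (e : ℕ → M.E) : Prop :=
  (∀ i ≤ k, ∀ j ≤ k, x i = x j → i = j) ∧
  (∀ i < k, e i ∈ M.EdgesBetween (x i) (x (i + 1))) ∧
  e k ∈ M.EdgesBetween (x k) (x 0) ∧
  (∀ i < k, adjH (M.col (e i)) (M.col (e (i + 1)))) ∧
  adjH (M.col (e k)) (M.col (e 0))

/-- A dynamic `H`-cycle with at most one change, on the distinct vertices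
`x 0, …, x k` (of length `k + 1`): either a genuine (closed) `H`-cycle, or an
`H`-path closed up with two parallel edges `e k, g ∈ E_{x k, x 0}` (one change). -/
def DynCycleOneChange (k : ℕ) (x : ℕ → V) : Prop :=
  (∀ i ≤ k, ∀ j ≤ k, x i = x j → i = j) ∧
  ∃ e : ℕ → M.E,
    (∀ i < k, e i ∈ M.EdgesBetween (x i) (x (i + 1))) ∧
    e k ∈ M.EdgesBetween (x k) (x 0) ∧
    (∀ i < k, adjH (M.col (e i)) (M.col (e (i + 1)))) ∧
    (adjH (M.col (e k)) (M.col (e 0)) ∨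
      ∃ g ∈ M.EdgesBetween (x k) (x 0), adjH (M.col g) (M.col (e 0)))

end HCMultigraph

open HCMultigraph


/-!
Join `u` and `v` when `E_{uv}` carries two different colours. By the degree hypothesis this
graph has minimum degree at least `(n + 1) / 2`, so Pósa's exchange argument gives it a
Hamiltonian cycle, along which every edge class offers at least two colours. Choosing one colour
per class greedily around the cycle gives a properly coloured cycle as soon as some class has a
colour missing from the class before it, or offers a third colour. Otherwise all classes carry
the same two colours; an edge `uw` of a third colour at the vertex `u` is then not on the cycle,
and two Pósa exchanges produce a Hamiltonian cycle through `uw` whose other edges are still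
dynamic and whose edge before `uw` is an old one, so that the greedy choice applies again.
-/

open Set

namespace SeqCycle

variable {V : Type*}

def edgeAt (n : ℕ) (x : ℕ → V) (i : ℕ) : Sym2 V := s(x i, x ((i + 1) % n))

def rotate (n s i : ℕ) : ℕ := (i + s) % n

def flipAfter (n t i : ℕ) : ℕ := if i ≤ t then i else n + t - i

lemma bijOn_rotate {n : ℕ} (hn : 0 < n) (s : ℕ) : BijOn (rotate n s) (Iio n) (Iio n) := by
  refine ((finite_Iio n).injOn_iff_bijOn_of_mapsTo fun i _ => Nat.mod_lt _ hn).1 ?_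
  intro i hi j hj h
  exact (Nat.ModEq.add_right_cancel' s h).eq_of_lt_of_lt hi hj

lemma bijOn_flipAfter (n t : ℕ) : BijOn (flipAfter n t) (Iio n) (Iio n) := by
  have hmaps : MapsTo (flipAfter n t) (Iio n) (Iio n) := by
    intro i hi
    simp only [mem_Iio, flipAfter] at *
    split_ifs <;> omega
  have hinv : LeftInvOn (flipAfter n t) (flipAfter n t) (Iio n) := by
    intro i hi
    simp only [mem_Iio, flipAfter] at *
    split_ifs <;> omega
  exact InvOn.bijOn ⟨hinv, hinv⟩ hmaps hmaps

lemma rotate_add_one_mod (n s i : ℕ) : rotate n s ((i + 1) % n) = (rotate n s i + 1) % n := by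
  simp only [rotate, Nat.mod_add_mod, Nat.add_right_comm]

lemma rotate_sub_one {n p : ℕ} (hp : p < n) : rotate n (p + 1) (n - 1) = p := by
  rw [rotate, show n - 1 + (p + 1) = p + n by omega, Nat.add_mod_right, Nat.mod_eq_of_lt hp]

lemma edgeAt_comp_rotate (n s i : ℕ) (x : ℕ → V) :
    edgeAt n (x ∘ rotate n s) i = edgeAt n x (rotate n s i) := by
  simp only [edgeAt, Function.comp_apply, rotate_add_one_mod]

section flipAfter

variable {n t : ℕ} (x : ℕ → V)

lemma edgeAt_comp_flipAfter_of_lt {i : ℕ} (hit : i < t) (ht : t < n) :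
    edgeAt n (x ∘ flipAfter n t) i = edgeAt n x i := by
  have h : (i + 1) % n = i + 1 := Nat.mod_eq_of_lt (by omega)
  simp only [edgeAt, Function.comp_apply, flipAfter, h, if_pos hit.le,
    if_pos (show i + 1 ≤ t by omega)]

lemma edgeAt_comp_flipAfter_of_gt {i : ℕ} (hti : t < i) (hin : i + 1 < n) :
    edgeAt n (x ∘ flipAfter n t) i = edgeAt n x (n + t - 1 - i) := by
  have h₁ : (i + 1) % n = i + 1 := Nat.mod_eq_of_lt hin
  have h₂ : (n + t - 1 - i + 1) % n = n + t - i := by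
    rw [Nat.mod_eq_of_lt (by omega)]; omega
  have h₃ : n + t - (i + 1) = n + t - 1 - i := by omega
  simp only [edgeAt, Function.comp_apply, flipAfter, h₁, h₂, h₃, if_neg (show ¬ i ≤ t by omega),
    if_neg (show ¬ i + 1 ≤ t by omega), Sym2.eq_swap]

lemma edgeAt_comp_flipAfter_self (ht : t + 1 < n) :
    edgeAt n (x ∘ flipAfter n t) t = s(x t, x (n - 1)) := by
  have h₁ : (t + 1) % n = t + 1 := Nat.mod_eq_of_lt ht
  have h₂ : n + t - (t + 1) = n - 1 := by omega
  simp only [edgeAt, Function.comp_apply, flipAfter, h₁, h₂, if_pos le_rfl,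
    if_neg (show ¬ t + 1 ≤ t by omega)]

lemma edgeAt_comp_flipAfter_last (ht : t + 1 < n) :
    edgeAt n (x ∘ flipAfter n t) (n - 1) = s(x (t + 1), x 0) := by
  have h₁ : (n - 1 + 1) % n = 0 := by rw [Nat.sub_add_cancel (by omega), Nat.mod_self]
  have h₂ : n + t - (n - 1) = t + 1 := by omega
  simp only [edgeAt, Function.comp_apply, flipAfter, h₁, h₂, if_neg (show ¬ n - 1 ≤ t by omega),
    if_pos (Nat.zero_le t)]

end flipAfter

end SeqCycle

namespace SimpleGraph

open SeqCycle

variable {V : Type*} (G : SimpleGraph V)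

def IsHamCycleSeq (n : ℕ) (x : ℕ → V) : Prop :=
  BijOn x (Iio n) univ ∧ ∀ i < n, edgeAt n x i ∈ G.edgeSet

def nonEdgeIdx (n : ℕ) (x : ℕ → V) : Set ℕ := {i | i < n ∧ edgeAt n x i ∉ G.edgeSet}

variable {G} {n : ℕ} {x : ℕ → V}

-- The `t` with `x t ~ x (n - 1)` and those with `x (t + 1) ~ x 0` lie in `[0, n - 1)` and are
-- at least `n + 1` in number altogether, so at least two `t` are of both kinds.
theorem exists_crossing (hx : BijOn x (Iio n) univ)
    (hdeg : n + 1 ≤ (G.neighborSet (x 0)).ncard + (G.neighborSet (x (n - 1))).ncard) (c : ℕ) :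
    ∃ t, t + 1 < n ∧ t ≠ c ∧ G.Adj (x t) (x (n - 1)) ∧ G.Adj (x (t + 1)) (x 0) := by
  set A := {t | t < n - 1 ∧ G.Adj (x t) (x (n - 1))}
  set B := {t | t < n - 1 ∧ G.Adj (x (t + 1)) (x 0)}
  have hA : G.neighborSet (x (n - 1)) = x '' A := by
    ext v
    refine ⟨fun hv => ?_, ?_⟩
    · obtain ⟨t, ht, rfl⟩ := hx.surjOn (mem_univ v)
      have : t ≠ n - 1 := by rintro rfl; exact G.irrefl hv
      exact ⟨t, ⟨by rw [mem_Iio] at ht; omega, hv.symm⟩, rfl⟩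
    · rintro ⟨t, ⟨-, ht⟩, rfl⟩
      exact ht.symm
  have hB : G.neighborSet (x 0) = (fun t => x (t + 1)) '' B := by
    ext v
    refine ⟨fun hv => ?_, ?_⟩
    · obtain ⟨t, ht, rfl⟩ := hx.surjOn (mem_univ v)
      have : t ≠ 0 := by rintro rfl; exact G.irrefl hv
      rw [mem_Iio] at ht
      refine ⟨t - 1, ⟨by omega, ?_⟩, ?_⟩ <;> simp only [Nat.sub_add_cancel (show 1 ≤ t by omega)]
      exact hv.symm
    · rintro ⟨t, ⟨-, ht⟩, rfl⟩
      exact ht.symm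
  have hAinj : InjOn x A := hx.injOn.mono fun t ht => show t < n by have := ht.1; omega
  have hBinj : InjOn (fun t => x (t + 1)) B := fun t ht t' ht' h =>
    Nat.succ_injective (hx.injOn (show t + 1 < n by have := ht.1; omega)
      (show t' + 1 < n by have := ht'.1; omega) h)
  have hAB : (A ∪ B).ncard ≤ n - 1 :=
    (ncard_le_ncard (union_subset (fun t ht => ht.1) fun t ht => ht.1) (finite_Iio _)).trans
      (by simp)
  have hsum := ncard_union_add_ncard_inter A B ((finite_Iio (n - 1)).subset fun t ht => ht.1)
    ((finite_Iio (n - 1)).subset fun t ht => ht.1)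
  rw [hA, hAinj.ncard_image, hB, hBinj.ncard_image] at hdeg
  obtain ⟨t₀, ht₀, -⟩ := hx.surjOn (mem_univ (x 0))
  obtain ⟨t, ⟨⟨ht, h₁⟩, -, h₂⟩, htc⟩ :=
    exists_ne_of_one_lt_ncard (s := A ∩ B) (by rw [mem_Iio] at ht₀; omega) c
  exact ⟨t, by omega, htc, h₁, h₂⟩

lemma finite_nonEdgeIdx : (G.nonEdgeIdx n x).Finite := (finite_Iio n).subset fun _ hi => hi.1

lemma ncard_nonEdgeIdx_comp_rotate_le (hn : 0 < n) (s : ℕ) :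
    (G.nonEdgeIdx n (x ∘ rotate n s)).ncard ≤ (G.nonEdgeIdx n x).ncard :=
  ncard_le_ncard_of_injOn (rotate n s)
    (fun _ hi => ⟨Nat.mod_lt _ hn, by rw [← edgeAt_comp_rotate]; exact hi.2⟩)
    ((bijOn_rotate hn s).injOn.mono fun _ hi => hi.1) finite_nonEdgeIdx

lemma ncard_nonEdgeIdx_comp_flipAfter_lt {t : ℕ} (ht : t + 1 < n)
    (h₁ : G.Adj (x t) (x (n - 1))) (h₂ : G.Adj (x (t + 1)) (x 0))
    (hlast : edgeAt n x (n - 1) ∉ G.edgeSet) :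
    (G.nonEdgeIdx n (x ∘ flipAfter n t)).ncard < (G.nonEdgeIdx n x).ncard := by
  set ψ : ℕ → ℕ := fun i => if i < t then i else n + t - 1 - i
  have hmaps :
      ∀ i ∈ G.nonEdgeIdx n (x ∘ flipAfter n t), ψ i ∈ G.nonEdgeIdx n x \ {n - 1} := by
    rintro i ⟨hi, hbad⟩
    have hit : i ≠ t := by
      rintro rfl
      exact hbad (by rw [edgeAt_comp_flipAfter_self x ht]; exact h₁)
    have hin : i ≠ n - 1 := by
      rintro rfl
      exact hbad (by rw [edgeAt_comp_flipAfter_last x ht]; exact h₂)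
    rcases lt_or_gt_of_ne hit with hlt | hgt
    · rw [edgeAt_comp_flipAfter_of_lt x hlt (by omega)] at hbad
      simp only [ψ, if_pos hlt]
      exact ⟨⟨hi, hbad⟩, by simp only [mem_singleton_iff]; omega⟩
    · rw [edgeAt_comp_flipAfter_of_gt x hgt (by omega)] at hbad
      simp only [ψ, if_neg (show ¬ i < t by omega)]
      exact ⟨⟨by omega, hbad⟩, by simp only [mem_singleton_iff]; omega⟩
  have hinj : InjOn ψ (G.nonEdgeIdx n (x ∘ flipAfter n t)) := by
    rintro i ⟨hi, -⟩ j ⟨hj, -⟩ h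
    simp only [ψ] at h
    split_ifs at h <;> omega
  calc _ ≤ (G.nonEdgeIdx n x \ {n - 1}).ncard :=
        ncard_le_ncard_of_injOn ψ hmaps hinj finite_nonEdgeIdx.sdiff
    _ < _ := ncard_sdiff_singleton_lt_of_mem ⟨by omega, hlast⟩ finite_nonEdgeIdx

theorem exists_isHamCycleSeq_of_bijOn (hdeg : ∀ v, n + 1 ≤ 2 * (G.neighborSet v).ncard)
    (hx : BijOn x (Iio n) univ) : ∃ z, G.IsHamCycleSeq n z := by
  induction hm : (G.nonEdgeIdx n x).ncard using Nat.strong_induction_on generalizing x with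
  | _ m ih =>
  by_cases hbad : (G.nonEdgeIdx n x).Nonempty
  · obtain ⟨b, hb, hbx⟩ := hbad
    have hn : 0 < n := by omega
    set r := x ∘ rotate n (b + 1)
    have hr : BijOn r (Iio n) univ := hx.comp (bijOn_rotate hn _)
    have hlast : edgeAt n r (n - 1) ∉ G.edgeSet := by
      rwa [edgeAt_comp_rotate, rotate_sub_one hb]
    obtain ⟨t, ht, -, h₁, h₂⟩ :=
      exists_crossing hr (by linarith [hdeg (r 0), hdeg (r (n - 1))]) 0
    exact ih _ (hm ▸ (ncard_nonEdgeIdx_comp_flipAfter_lt ht h₁ h₂ hlast).trans_le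
      (ncard_nonEdgeIdx_comp_rotate_le hn _)) (hr.comp (bijOn_flipAfter n t)) rfl
  · exact ⟨x, hx, fun i hi => by_contra fun h => hbad ⟨i, hi, h⟩⟩

theorem exists_isHamCycleSeq [Finite V] [Nonempty V]
    (hdeg : ∀ v, Nat.card V + 1 ≤ 2 * (G.neighborSet v).ncard) :
    ∃ x, G.IsHamCycleSeq (Nat.card V) x := by
  set e := Finite.equivFin V
  have hn : 0 < Nat.card V := Nat.card_pos
  refine exists_isHamCycleSeq_of_bijOn hdeg
    (x := fun i => e.symm ⟨i % Nat.card V, Nat.mod_lt _ hn⟩) ⟨fun _ _ => mem_univ _, ?_, ?_⟩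
  · intro i hi j hj h
    simp only [mem_Iio] at hi hj
    simpa [Nat.mod_eq_of_lt hi, Nat.mod_eq_of_lt hj] using e.symm.injective h
  · intro v _
    exact ⟨e v, (e v).isLt, by simp [Nat.mod_eq_of_lt (e v).isLt]⟩

theorem exists_flipAfter_keeping_edge {Q : ℕ → V} {m : ℕ} (hQ : BijOn Q (Iio n) univ)
    (hdeg : ∀ v, n + 1 ≤ 2 * (G.neighborSet v).ncard) (hm : 0 < m) (hmn : m + 2 < n)
    (hpath : ∀ i, i + 1 < n → i ≠ m → edgeAt n Q i ∈ G.edgeSet) :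
    ∃ z p, BijOn z (Iio n) univ ∧ 0 < p ∧ p < n ∧ edgeAt n z p = edgeAt n Q m ∧
      (edgeAt n z (p - 1) = edgeAt n Q (m - 1) ∨ edgeAt n z (p - 1) = edgeAt n Q (m + 1)) ∧
      ∀ i < n, i ≠ p → edgeAt n z i ∈ G.edgeSet := by
  obtain ⟨t, ht, htm, h₁, h₂⟩ :=
    exists_crossing hQ (by linarith [hdeg (Q 0), hdeg (Q (n - 1))]) m
  have hgood : ∀ i < n, (i < t → i ≠ m) → (t < i → n + t - 1 - i ≠ m) →
      edgeAt n (Q ∘ flipAfter n t) i ∈ G.edgeSet := by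
    intro i hi hlt hgt
    rcases lt_trichotomy i t with hit | rfl | hti
    · rw [edgeAt_comp_flipAfter_of_lt Q hit (by omega)]
      exact hpath i (by omega) (hlt hit)
    · rw [edgeAt_comp_flipAfter_self Q ht]
      exact h₁
    · by_cases hin : i = n - 1
      · rw [hin, edgeAt_comp_flipAfter_last Q ht]
        exact h₂
      · rw [edgeAt_comp_flipAfter_of_gt Q hti (by omega)]
        exact hpath _ (by omega) (hgt hti)
  refine ⟨Q ∘ flipAfter n t, ?_⟩
  rcases lt_or_gt_of_ne htm with htm | hmt
  · -- the flip reverses the segment containing the edge at `m`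
    refine ⟨n + t - 1 - m, hQ.comp (bijOn_flipAfter n t), by omega, by omega, ?_, Or.inr ?_,
      fun i hi hip => hgood i hi (by omega) (by omega)⟩
    · rw [edgeAt_comp_flipAfter_of_gt Q (by omega) (by omega),
        show n + t - 1 - (n + t - 1 - m) = m by omega]
    · rw [edgeAt_comp_flipAfter_of_gt Q (by omega) (by omega),
        show n + t - 1 - (n + t - 1 - m - 1) = m + 1 by omega]
  · refine ⟨m, hQ.comp (bijOn_flipAfter n t), hm, by omega,
      edgeAt_comp_flipAfter_of_lt Q hmt (by omega),
      Or.inl (edgeAt_comp_flipAfter_of_lt Q (by omega) (by omega)),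
      fun i hi hip => hgood i hi (by omega) (by omega)⟩

theorem IsHamCycleSeq.exists_reroute {y : ℕ → V} (hy : G.IsHamCycleSeq n y)
    (hdeg : ∀ v, n + 1 ≤ 2 * (G.neighborSet v).ncard) {u w : V} (huw : u ≠ w)
    (hnot : ∀ i < n, edgeAt n y i ≠ s(u, w)) :
    ∃ z p, BijOn z (Iio n) univ ∧ 0 < p ∧ p < n ∧ edgeAt n z p = s(u, w) ∧
      (∃ i < n, edgeAt n z (p - 1) = edgeAt n y i) ∧
      ∀ i < n, i ≠ p → edgeAt n z i ∈ G.edgeSet := by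
  obtain ⟨a, ha, rfl⟩ := hy.1.surjOn (mem_univ u)
  rw [mem_Iio] at ha
  have hn : 0 < n := by omega
  set r := y ∘ rotate n (a + 1)
  have hr : BijOn r (Iio n) univ := hy.1.comp (bijOn_rotate hn _)
  have hr_edge : ∀ i, edgeAt n r i = edgeAt n y (rotate n (a + 1) i) :=
    fun i => edgeAt_comp_rotate n _ i y
  have hr_mem : ∀ i, edgeAt n r i ∈ G.edgeSet := fun i => by
    rw [hr_edge]
    exact hy.2 _ (Nat.mod_lt _ hn)
  have hr_last : r (n - 1) = y a := congrArg y (rotate_sub_one ha)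
  obtain ⟨m, hm, rfl⟩ := hr.surjOn (mem_univ w)
  rw [mem_Iio] at hm
  -- `w` is neither `u` nor one of its two neighbours on the cycle
  have hm₀ : m ≠ 0 := by
    rintro rfl
    refine hnot (rotate n (a + 1) (n - 1)) (Nat.mod_lt _ hn) ?_
    rw [← hr_edge, edgeAt, Nat.sub_add_cancel hn, Nat.mod_self, hr_last]
  have hm₁ : m ≠ n - 1 := by
    rintro rfl
    exact huw hr_last.symm
  have hm₂ : m ≠ n - 2 := by
    rintro rfl
    refine hnot (rotate n (a + 1) (n - 2)) (Nat.mod_lt _ hn) ?_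
    rw [← hr_edge, edgeAt, show n - 2 + 1 = n - 1 by omega, Nat.mod_eq_of_lt (by omega), hr_last,
      Sym2.eq_swap]
  set Q := r ∘ flipAfter n m
  have hQ : ∀ i, i + 1 < n → i ≠ m → edgeAt n Q i ∈ G.edgeSet := by
    intro i hi him
    rcases lt_or_gt_of_ne him with h | h
    · rw [edgeAt_comp_flipAfter_of_lt r h (by omega)]
      exact hr_mem i
    · rw [edgeAt_comp_flipAfter_of_gt r h hi]
      exact hr_mem _
  obtain ⟨z, p, hz, hp₀, hp, hzp, hprev, hgood⟩ :=
    exists_flipAfter_keeping_edge (hr.comp (bijOn_flipAfter n m)) hdeg (by omega) (by omega) hQ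
  refine ⟨z, p, hz, hp₀, hp, ?_, ?_, hgood⟩
  · rw [hzp, edgeAt_comp_flipAfter_self r (by omega), hr_last, Sym2.eq_swap]
  · rcases hprev with h | h
    · rw [h, edgeAt_comp_flipAfter_of_lt r (by omega) (by omega), hr_edge]
      exact ⟨_, Nat.mod_lt _ hn, rfl⟩
    · rw [h, edgeAt_comp_flipAfter_of_gt r (by omega) (by omega), hr_edge]
      exact ⟨_, Nat.mod_lt _ hn, rfl⟩

end SimpleGraph

theorem exists_cyclic_choice {α : Type*} {L : ℕ → Set α} {k : ℕ} {s : α} (hk : 0 < k)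
    (hs : s ∈ L k) (hL : ∀ i, i + 1 < k → (L i).Nontrivial)
    (hlast : (L (k - 1) \ {s}).Nontrivial) :
    ∃ f : ℕ → α, (∀ i ≤ k, f i ∈ L i) ∧ (∀ i < k, f i ≠ f (i + 1)) ∧ f k ≠ f 0 := by
  set L' : ℕ → Set α := fun i => if i + 1 = k then L i \ {s} else L i
  have hL'_sub : ∀ i, L' i ⊆ L i := fun i => by
    by_cases h : i + 1 = k
    · simp only [L', if_pos h, sdiff_subset]
    · simp only [L', if_neg h, subset_rfl]
  have hL' : ∀ i < k, ∀ z, ∃ a ∈ L' i, a ≠ z := by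
    intro i hi z
    by_cases h : i + 1 = k
    · obtain rfl : i = k - 1 := by omega
      simp only [L', if_pos h]
      exact hlast.exists_ne z
    · simp only [L', if_neg h]
      exact (hL i (by omega)).exists_ne z
  choose! pick hpick hpick_ne using hL'
  -- greedy choice from left to right, starting from the colour `s` reserved for position `k`
  let g : ℕ → α := fun i => Nat.rec s (fun j a => pick j a) i
  refine ⟨fun i => if i < k then g (i + 1) else s, fun i hi => ?_, fun i hi => ?_, ?_⟩
  · dsimp only
    split_ifs with h
    · exact hL'_sub i (hpick i h _)
    · rwa [show i = k by omega]
  · by_cases h : i + 1 < k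
    · simp only [if_pos hi, if_pos h]
      exact (hpick_ne (i + 1) h _).symm
    · have hmem := hpick i hi (g i)
      simp only [L', if_pos (show i + 1 = k by omega)] at hmem
      simp only [if_pos hi, if_neg h]
      exact hmem.2
  · simp only [lt_irrefl, if_false, if_pos hk]
    exact (hpick_ne 0 hk s).symm

namespace HCMultigraph

open SeqCycle

variable {V C : Type} (M : HCMultigraph V C)

def colorsOn (p : Sym2 V) : Set C := M.col '' {e | M.ends e = p}

lemma colorsOn_diag (v : V) : M.colorsOn s(v, v) = ∅ :=
  eq_empty_of_forall_notMem fun _ ⟨e, he, _⟩ =>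
    M.loopless e (by rw [show M.ends e = s(v, v) from he]; exact Sym2.mk_isDiag_iff.2 rfl)

lemma dynamicEdgeSet_ne_iff {u v : V} :
    M.DynamicEdgeSet (· ≠ ·) u v ↔ (M.colorsOn s(u, v)).Nontrivial := by
  have hNH : ∀ a b : C, NH (· ≠ ·) a ⊆ NH (· ≠ ·) b → a = b :=
    fun a b h => by_contra fun hab => h hab rfl
  constructor
  · rintro ⟨e, he, f, hf, hef, -⟩
    exact ⟨_, ⟨e, he, rfl⟩, _, ⟨f, hf, rfl⟩, fun h => hef (h ▸ subset_rfl)⟩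
  · rintro ⟨_, ⟨e, he, rfl⟩, _, ⟨f, hf, rfl⟩, hef⟩
    exact ⟨e, he, f, hf, fun h => hef (hNH _ _ h), fun h => hef (hNH _ _ h).symm⟩

def dynGraph : SimpleGraph V where
  Adj u v := M.DynamicEdgeSet (· ≠ ·) u v
  symm := ⟨fun u v h => by
    rw [dynamicEdgeSet_ne_iff] at h ⊢
    rwa [Sym2.eq_swap]⟩
  loopless := ⟨fun u h => by
    rw [dynamicEdgeSet_ne_iff, colorsOn_diag] at h
    exact not_nontrivial_empty h⟩

lemma mem_edgeSet_dynGraph {p : Sym2 V} :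
    p ∈ M.dynGraph.edgeSet ↔ (M.colorsOn p).Nontrivial := by
  induction p using Sym2.inductionOn
  exact M.dynamicEdgeSet_ne_iff

lemma dynDegree_ne_eq (v : V) : M.dynDegree (· ≠ ·) v = (M.dynGraph.neighborSet v).ncard := rfl

theorem exists_isHCycle_of_coloring {k : ℕ} {z : ℕ → V} (hz : BijOn z (Iio (k + 1)) univ)
    {f : ℕ → C} (hf : ∀ i ≤ k, f i ∈ M.colorsOn (edgeAt (k + 1) z i))
    (hstep : ∀ i < k, f i ≠ f (i + 1)) (hwrap : f k ≠ f 0) :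
    ∃ (k : ℕ) (x : ℕ → V) (e : ℕ → M.E),
      M.IsHCycle (· ≠ ·) k x e ∧ ∀ v : V, ∃ i ≤ k, x i = v := by
  have : Nonempty M.E := ⟨(hf 0 (Nat.zero_le k)).choose⟩
  choose! e he hcol using hf
  refine ⟨k, z, e, ⟨fun i hi j hj h => hz.injOn (mem_Iio.2 (Nat.lt_succ_of_le hi))
    (mem_Iio.2 (Nat.lt_succ_of_le hj)) h, fun i hi => ?_, ?_, fun i hi => ?_, ?_⟩, fun v => ?_⟩
  · have h := he i hi.le
    rwa [edgeAt, Nat.mod_eq_of_lt (by omega)] at h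
  · have h := he k le_rfl
    rwa [edgeAt, Nat.mod_self] at h
  · rw [hcol i hi.le, hcol (i + 1) hi]
    exact hstep i hi
  · rw [hcol k le_rfl, hcol 0 (Nat.zero_le k)]
    exact hwrap
  · obtain ⟨i, hi, rfl⟩ := hz.surjOn (mem_univ v)
    exact ⟨i, Nat.lt_succ_iff.1 hi, rfl⟩

theorem exists_isHCycle_of_nontrivial_but_one {n q : ℕ} {z : ℕ → V} {s : C}
    (hz : BijOn z (Iio n) univ) (hq : q < n) (hs : s ∈ M.colorsOn (edgeAt n z ((q + 1) % n)))
    (hL : ∀ i < n, i ≠ (q + 1) % n → (M.colorsOn (edgeAt n z i)).Nontrivial)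
    (hprev : (M.colorsOn (edgeAt n z q) \ {s}).Nontrivial) :
    ∃ (k : ℕ) (x : ℕ → V) (e : ℕ → M.E),
      M.IsHCycle (· ≠ ·) k x e ∧ ∀ v : V, ∃ i ≤ k, x i = v := by
  obtain ⟨k, rfl⟩ : ∃ k, n = k + 1 := ⟨n - 1, by omega⟩
  -- a cycle of length one would consist of a loop
  have hk : 0 < k := by
    by_contra hk
    obtain rfl : k = 0 := by omega
    obtain rfl : q = 0 := by omega
    simp [edgeAt, colorsOn_diag] at hs
  have hrot_last : rotate (k + 1) (q + 2) k = (q + 1) % (k + 1) := by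
    rw [rotate, show k + (q + 2) = q + 1 + (k + 1) by omega, Nat.add_mod_right]
  have hrot_prev : rotate (k + 1) (q + 2) (k - 1) = q := by
    rw [rotate, show k - 1 + (q + 2) = q + (k + 1) by omega, Nat.add_mod_right,
      Nat.mod_eq_of_lt hq]
  set L := fun i => M.colorsOn (edgeAt (k + 1) (z ∘ rotate (k + 1) (q + 2)) i)
  have hLk : s ∈ L k := by
    simpa only [L, edgeAt_comp_rotate, hrot_last] using hs
  have hL' : ∀ i, i + 1 < k → (L i).Nontrivial := by
    intro i hi
    simp only [L, edgeAt_comp_rotate]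
    refine hL _ (Nat.mod_lt _ (by omega)) fun h => ?_
    have := (bijOn_rotate (by omega) (q + 2)).injOn (mem_Iio.2 (by omega)) (mem_Iio.2 (by omega))
      (h.trans hrot_last.symm)
    omega
  have hLprev : (L (k - 1) \ {s}).Nontrivial := by
    simpa only [L, edgeAt_comp_rotate, hrot_prev] using hprev
  obtain ⟨f, hf, hstep, hwrap⟩ := exists_cyclic_choice hk hLk hL' hLprev
  exact M.exists_isHCycle_of_coloring (hz.comp (bijOn_rotate (by omega) _)) hf hstep hwrap

end HCMultigraph

namespace HCMultigraph

open SeqCycle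

variable {V C : Type} (M : HCMultigraph V C)

theorem exists_isHCycle_of_isHamCycleSeq {n q : ℕ} {y : ℕ → V} {s : C}
    (hy : M.dynGraph.IsHamCycleSeq n y) (hq : q < n)
    (hs : s ∈ M.colorsOn (edgeAt n y ((q + 1) % n)))
    (hprev : (M.colorsOn (edgeAt n y q) \ {s}).Nontrivial) :
    ∃ (k : ℕ) (x : ℕ → V) (e : ℕ → M.E),
      M.IsHCycle (· ≠ ·) k x e ∧ ∀ v : V, ∃ i ≤ k, x i = v :=
  M.exists_isHCycle_of_nontrivial_but_one hy.1 hq hs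
    (fun i hi _ => M.mem_edgeSet_dynGraph.1 (hy.2 i hi)) hprev

theorem exists_isHCycle_of_col_notMem {n : ℕ} {y : ℕ → V} (hy : M.dynGraph.IsHamCycleSeq n y)
    (hdeg : ∀ v, n + 1 ≤ 2 * (M.dynGraph.neighborSet v).ncard) (e : M.E)
    (he : ∀ i < n, M.col e ∉ M.colorsOn (edgeAt n y i)) :
    ∃ (k : ℕ) (x : ℕ → V) (e : ℕ → M.E),
      M.IsHCycle (· ≠ ·) k x e ∧ ∀ v : V, ∃ i ≤ k, x i = v := by
  obtain ⟨⟨u, w⟩, huw⟩ := Sym2.mk_surjective (M.ends e)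
  have hd : M.col e ∈ M.colorsOn s(u, w) := ⟨e, huw.symm, rfl⟩
  have hne : u ≠ w := by
    rintro rfl
    exact M.loopless e (huw ▸ Sym2.mk_isDiag_iff.2 rfl)
  obtain ⟨z, p, hz, hp₀, hp, hzp, ⟨j, hj, hzj⟩, hgood⟩ :=
    hy.exists_reroute hdeg hne fun i hi h => he i hi (h ▸ hd)
  have hq : (p - 1 + 1) % n = p := by rw [Nat.sub_add_cancel hp₀, Nat.mod_eq_of_lt hp]
  refine M.exists_isHCycle_of_nontrivial_but_one hz (q := p - 1) (by omega) (by rwa [hq, hzp])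
    (fun i hi hip => M.mem_edgeSet_dynGraph.1 (hgood i hi (hq ▸ hip))) ?_
  rw [hzj, sdiff_singleton_eq_self (he j hj)]
  exact M.mem_edgeSet_dynGraph.1 (hy.2 j hj)

end HCMultigraph

open SeqCycle in
theorem stmt15_general {V : Type} [Fintype V] (c : ℕ)
    (M : HCMultigraph V (Fin c))
    (h3 : ∃ u : V, ∃ e ∈ M.Incident u, ∃ f ∈ M.Incident u, ∃ g ∈ M.Incident u,
      M.col e ≠ M.col f ∧ M.col e ≠ M.col g ∧ M.col f ≠ M.col g)
    (hdeg : ∀ x : V, Fintype.card V + 1 ≤ 2 * M.dynDegree (fun a b => a ≠ b) x) :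
    ∃ (k : ℕ) (x : ℕ → V) (e : ℕ → M.E),
      M.IsHCycle (fun a b => a ≠ b) k x e ∧ ∀ v : V, ∃ i ≤ k, x i = v := by
  obtain ⟨u, e₁, he₁, e₂, he₂, e₃, he₃, h₁₂, h₁₃, h₂₃⟩ := h3
  have : Nonempty V := ⟨u⟩
  have hdeg' : ∀ v, Nat.card V + 1 ≤ 2 * (M.dynGraph.neighborSet v).ncard := by
    simpa only [Nat.card_eq_fintype_card, dynDegree_ne_eq] using hdeg
  obtain ⟨y, hy⟩ := M.dynGraph.exists_isHamCycleSeq hdeg'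
  set n := Nat.card V
  have hn : 0 < n := Nat.card_pos
  set L : ℕ → Set (Fin c) := fun i => M.colorsOn (edgeAt n y i)
  by_cases hdrop : ∃ i < n, ¬ L ((i + 1) % n) ⊆ L i
  · obtain ⟨i, hi, hsub⟩ := hdrop
    obtain ⟨s, hs, hsi⟩ := not_subset.1 hsub
    refine M.exists_isHCycle_of_isHamCycleSeq hy hi hs ?_
    rw [sdiff_singleton_eq_self hsi]
    exact M.mem_edgeSet_dynGraph.1 (hy.2 i hi)
  push Not at hdrop
  have hanti : AntitoneOn L (Iio n) := antitoneOn_of_add_one_le ordConnected_Iio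
    fun i _ _ hi => by
      rw [mem_Iio] at hi
      simpa only [Nat.mod_eq_of_lt hi] using hdrop i (by omega)
  by_cases hout : ∃ e ∈ M.Incident u, M.col e ∉ L 0
  · obtain ⟨e, -, he⟩ := hout
    exact M.exists_isHCycle_of_col_notMem hy hdeg' e
      fun i hi h => he (hanti (mem_Iio.2 hn) (mem_Iio.2 hi) (Nat.zero_le i) h)
  push Not at hout
  have hlast : L 0 ⊆ L (n - 1) := by
    simpa only [Nat.sub_add_cancel hn, Nat.mod_self] using hdrop (n - 1) (by omega)
  refine M.exists_isHCycle_of_isHamCycleSeq hy (q := n - 1) (by omega)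
    (by rw [Nat.sub_add_cancel hn, Nat.mod_self]; exact hout e₃ he₃) ?_
  exact ⟨_, ⟨hlast (hout e₁ he₁), h₁₃⟩, _, ⟨hlast (hout e₂ he₂), h₂₃⟩, h₁₂⟩

theorem stmt15 {V : Type} [Fintype V] (c : ℕ) (hc : 3 ≤ c)
    (M : HCMultigraph V (Fin c))
    (h2 : ∀ u : V, ∃ e ∈ M.Incident u, ∃ f ∈ M.Incident u, M.col e ≠ M.col f)
    (h3 : ∃ u : V, ∃ e ∈ M.Incident u, ∃ f ∈ M.Incident u, ∃ g ∈ M.Incident u,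
      M.col e ≠ M.col f ∧ M.col e ≠ M.col g ∧ M.col f ≠ M.col g)
    (hdeg : ∀ x : V, Fintype.card V + 1 ≤ 2 * M.dynDegree (fun a b => a ≠ b) x) :
    ∃ (k : ℕ) (x : ℕ → V) (e : ℕ → M.E),
      M.IsHCycle (fun a b => a ≠ b) k x e ∧ ∀ v : V, ∃ i ≤ k, x i = v :=
  stmt15_general c M h3 hdeg
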